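/- Let S : PMF ℕ → ℕ → PMF ℕ satisfy S ν 0 = pure 0 and S ν (z+1) = (S ν z).bind (fun t => ν.bind (fun x => pure (t + x))) for all ν and z. Let Z and η be PMFs on ℕ whose means λ = ∑'_{z} z·Z(z) and α = ∑'_{k} k·η(k) are finite with λ > 1. Suppose μ is a PMF on ℕ satisfying the fixed-point equation μ = η.bind (fun e => (Z.bind (fun z => S (μ.map (fun x => x − 1)) z)).bind (fun s => pure (e + s))), where x − 1 is truncated subtraction on ℕ, and suppose m = ∑'_{k} k·μ(k) is finite. Then, as real numbers, m = (λ − α − λ·(μ(0)).toReal)/(λ − 1). -/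

import Mathlib

/-!
Taking means in the fixed-point equation (Wald's identity, applied twice) gives
`E[X] = α + λ E[(X - 1)⁺]`, while `E[(X - 1)⁺] = E[X] - P(X ≠ 0) = E[X] - 1 + P(X = 0)`.
When `E[X]` is finite these two linear relations can be solved for `E[X]`, since `λ ≠ 1`.
-/

open scoped ENNReal

namespace PMF

noncomputable def mean (ν : PMF ℕ) : ℝ≥0∞ := ∑' k : ℕ, (k : ℝ≥0∞) * ν k

theorem mean_bind {α : Type*} (p : PMF α) (f : α → PMF ℕ) :
    (p.bind f).mean = ∑' a, p a * (f a).mean := by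
  simp only [mean, bind_apply, ← ENNReal.tsum_mul_left]
  rw [ENNReal.tsum_comm]
  exact tsum_congr fun a => tsum_congr fun k => by ring

theorem mean_pure (n : ℕ) : (pure n).mean = n := by
  rw [mean, tsum_eq_single n fun k hk => by simp [pure_apply, hk]]
  simp

theorem mean_map {α : Type*} (p : PMF α) (f : α → ℕ) :
    (p.map f).mean = ∑' a, (f a : ℝ≥0∞) * p a := by
  rw [map, mean_bind]
  exact tsum_congr fun a => by simp [mean_pure, mul_comm]

theorem mean_bind_of_mean_eq_add (p : PMF ℕ) (f : ℕ → PMF ℕ) (c : ℝ≥0∞)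
    (hf : ∀ n, (f n).mean = n + c) : (p.bind f).mean = p.mean + c := by
  simp_rw [mean_bind, hf, mul_add, ENNReal.tsum_add, ENNReal.tsum_mul_right, tsum_coe, one_mul,
    mul_comm (p _)]
  rfl

theorem mean_bind_of_mean_eq_mul (p : PMF ℕ) (f : ℕ → PMF ℕ) (c : ℝ≥0∞)
    (hf : ∀ n, (f n).mean = n * c) : (p.bind f).mean = p.mean * c := by
  simp_rw [mean_bind, hf, ← mul_assoc, ENNReal.tsum_mul_right, mul_comm (p _)]
  rfl

theorem mean_bind_pure_add (p : PMF ℕ) (e : ℕ) :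
    (p.bind fun s => pure (e + s)).mean = e + p.mean := by
  rw [mean_bind_of_mean_eq_add p _ e fun s => by rw [mean_pure, Nat.cast_add, add_comm],
    add_comm]

-- `S ν z` is the law of a sum of `z` independent `ν`-samples; this is Wald's identity for it.
theorem mean_iidSum_eq_mul (S : PMF ℕ → ℕ → PMF ℕ) (hS0 : ∀ ν, S ν 0 = pure 0)
    (hSs : ∀ ν z, S ν (z + 1) = (S ν z).bind fun t => ν.bind fun x => pure (t + x))
    (ν : PMF ℕ) (z : ℕ) : (S ν z).mean = z * ν.mean := by
  induction z with
  | zero => simp [hS0, mean_pure]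
  | succ n ih =>
    rw [hSs, mean_bind_of_mean_eq_add _ _ ν.mean fun t => mean_bind_pure_add ν t, ih]
    push_cast
    ring

theorem mean_eq_mean_map_pred_add (μ : PMF ℕ) :
    μ.mean = (μ.map fun x => x - 1).mean + (1 - μ 0) := by
  have hpos : ∑' x, (if x = 0 then 0 else μ x) = 1 - μ 0 := by
    refine ENNReal.eq_sub_of_add_eq (μ.apply_ne_top 0) ?_
    rw [add_comm]
    convert (ENNReal.tsum_eq_add_tsum_ite (f := μ) 0).symm.trans μ.tsum_coe
  rw [mean_map, ← hpos, ← ENNReal.tsum_add]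
  refine tsum_congr fun x => ?_
  rcases x with _ | k
  · simp
  · simp only [Nat.add_sub_cancel, Nat.add_one_ne_zero, if_false]
    push_cast
    ring

end PMF

/-- Expectation formula `E[X] = (λ - α - λ P(X=0))/(λ - 1)` for the parking
process on a supercritical Galton–Watson tree: if `μ` is the law of the total
number of cars arriving at the root, satisfying the recursive distributional
equation, and has finite mean `m`, then `m = (λ - α - λ μ(0))/(λ - 1)`. -/
theorem stmt_18 (S : PMF ℕ → ℕ → PMF ℕ)
    (hS0 : ∀ ν : PMF ℕ, S ν 0 = PMF.pure 0)
    (hSs : ∀ (ν : PMF ℕ) (z : ℕ),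
      S ν (z + 1) = (S ν z).bind (fun t => ν.bind (fun x => PMF.pure (t + x))))
    (Z η : PMF ℕ) (lam α : ℝ≥0∞)
    (hlam : lam = ∑' z : ℕ, (z : ℝ≥0∞) * Z z)
    (hα : α = ∑' k : ℕ, (k : ℝ≥0∞) * η k)
    (hlamfin : lam < ⊤) (hαfin : α < ⊤) (hlamgt : 1 < lam)
    (μ : PMF ℕ)
    (hfix : μ = η.bind (fun e =>
      (Z.bind (fun z => S (μ.map (fun x => x - 1)) z)).bind
        (fun s => PMF.pure (e + s))))
    (m : ℝ≥0∞) (hm : m = ∑' k : ℕ, (k : ℝ≥0∞) * μ k) (hmfin : m < ⊤) :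
    m.toReal = (lam.toReal - α.toReal - lam.toReal * (μ 0).toReal)
      / (lam.toReal - 1) := by
  set M' := (μ.map fun x => x - 1).mean
  have hm' : m = μ.mean := hm
  have hwald : m = α + lam * M' := by
    rw [hm', hα, hlam]
    conv_lhs => rw [hfix]
    rw [PMF.mean_bind_of_mean_eq_add η _ _ fun e => PMF.mean_bind_pure_add _ e,
      PMF.mean_bind_of_mean_eq_mul Z _ M' (PMF.mean_iidSum_eq_mul S hS0 hSs _)]
    rfl
  have htrunc : m = M' + (1 - μ 0) := hm' ▸ PMF.mean_eq_mean_map_pred_add μ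
  have hM'fin : M' ≠ ⊤ := ne_top_of_le_ne_top hmfin.ne (htrunc ▸ le_self_add)
  replace hwald : m.toReal = α.toReal + lam.toReal * M'.toReal := by
    rw [hwald, ENNReal.toReal_add hαfin.ne (ENNReal.mul_ne_top hlamfin.ne hM'fin),
      ENNReal.toReal_mul]
  replace htrunc : m.toReal = M'.toReal + (1 - (μ 0).toReal) := by
    rw [htrunc, ENNReal.toReal_add hM'fin (by simp),
      ENNReal.toReal_sub_of_le (μ.coe_le_one 0) ENNReal.one_ne_top, ENNReal.toReal_one]
  have hL : 1 < lam.toReal := by simpa using ENNReal.toReal_strict_mono hlamfin.ne hlamgt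
  rw [eq_div_iff (by linarith)]
  linear_combination lam.toReal * htrunc - hwald
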